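/- arXiv:hep-th/9802033 — 3 statements merged into one kernel-verified Lean document; each statement's English description precedes it below -/
import Mathlib

section
/- Let a, a_D ∈ ℂ with a ≠ 0 and let (p₁,q₁), (p₂,q₂) ∈ ℤ × ℤ with p₁q₂ − p₂q₁ ≠ 0. If |（p₁+p₂)a + (q₁+q₂)a_D| = |p₁·a + q₁·a_D| + |p₂·a + q₂·a_D| and all three quantities are nonzero, then Im(a_D/a) = 0. -/
/-!
If `‖z₁ + z₂‖ = ‖z₁‖ + ‖z₂‖`, then `z₁` and `z₂` lie on a common ray, so `conj z₁ * z₂` is real.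
For `zᵢ = pᵢ a + qᵢ a_D` the imaginary part of `conj z₁ * z₂` is
`(p₁ q₂ - p₂ q₁) · Im (a_D * conj a)`, and `a_D / a = a_D * conj a / |a|²`; so a nonzero pairing
of the charges forces `a_D / a` to be real.
-/

open Complex ComplexConjugate

namespace Complex

theorem im_conj_mul_eq_zero_of_sameRay {x y : ℂ} (h : SameRay ℝ x y) : (conj x * y).im = 0 := by
  obtain ⟨u, s, t, -, -, -, rfl, rfl⟩ := h.exists_eq_smul
  rw [real_smul, real_smul, map_mul, conj_ofReal, mul_mul_mul_comm, conj_mul', ← ofReal_pow,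
    ← ofReal_mul, ← ofReal_mul, ofReal_im]

theorem im_conj_mul_add_mul (a b : ℂ) (p₁ q₁ p₂ q₂ : ℝ) :
    (conj (p₁ * a + q₁ * b) * (p₂ * a + q₂ * b)).im = (p₁ * q₂ - p₂ * q₁) * (b * conj a).im := by
  simp only [mul_im, mul_re, add_re, add_im, conj_re, conj_im, ofReal_re, ofReal_im]
  ring

theorem div_im_eq_zero_of_im_mul_conj_eq_zero {a b : ℂ} (h : (b * conj a).im = 0) :
    (b / a).im = 0 := by
  rw [div_eq_mul_inv, inv_def, ← mul_assoc, im_mul_ofReal, h, zero_mul]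

end Complex

theorem decay_threshold_implies_marginal_stability_general (a aD : ℂ)
    (p₁ q₁ p₂ q₂ : ℤ) (hnl : p₁ * q₂ - p₂ * q₁ ≠ 0)
    (hsat : ‖((p₁ + p₂ : ℤ) : ℂ) * a + ((q₁ + q₂ : ℤ) : ℂ) * aD‖
      = ‖(p₁ : ℂ) * a + (q₁ : ℂ) * aD‖
        + ‖(p₂ : ℂ) * a + (q₂ : ℂ) * aD‖) :
    (aD / a).im = 0 := by
  have hray : SameRay ℝ ((p₁ : ℂ) * a + (q₁ : ℂ) * aD) ((p₂ : ℂ) * a + (q₂ : ℂ) * aD) := by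
    rw [sameRay_iff_norm_add, ← hsat]
    push_cast
    congr 1
    ring
  have hpair := im_conj_mul_add_mul a aD p₁ q₁ p₂ q₂
  simp only [ofReal_intCast] at hpair
  rw [im_conj_mul_eq_zero_of_sameRay hray, eq_comm] at hpair
  have hnl' : (p₁ * q₂ - p₂ * q₁ : ℝ) ≠ 0 := by exact_mod_cast hnl
  exact div_im_eq_zero_of_im_mul_conj_eq_zero ((mul_eq_zero.mp hpair).resolve_left hnl')

theorem decay_threshold_implies_marginal_stability (a aD : ℂ) (ha : a ≠ 0)
    (p₁ q₁ p₂ q₂ : ℤ) (hnl : p₁ * q₂ - p₂ * q₁ ≠ 0)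
    (h1 : (p₁ : ℂ) * a + (q₁ : ℂ) * aD ≠ 0)
    (h2 : (p₂ : ℂ) * a + (q₂ : ℂ) * aD ≠ 0)
    (h3 : ((p₁ + p₂ : ℤ) : ℂ) * a + ((q₁ + q₂ : ℤ) : ℂ) * aD ≠ 0)
    (hsat : ‖((p₁ + p₂ : ℤ) : ℂ) * a + ((q₁ + q₂ : ℤ) : ℂ) * aD‖
      = ‖(p₁ : ℂ) * a + (q₁ : ℂ) * aD‖
        + ‖(p₂ : ℂ) * a + (q₂ : ℂ) * aD‖) :
    (aD / a).im = 0 :=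
  decay_threshold_implies_marginal_stability_general a aD p₁ q₁ p₂ q₂ hnl hsat
end

section
/- Let a₀, d₀, a₃ ∈ ℂ with a₀ ≠ 0, and set c₂ = 2a₀ + d₀ ≠ 0 and c₃ = a₃ − a₀ ≠ 0. Suppose d₀/a₀ is real with −2 < d₀/a₀, and c₂/|c₂| = c₃/|c₃|. Then a₃/a₀ is real and a₃/a₀ > 1. -/
/-! Equal phases make `c₃` a positive real multiple `k c₂`. Since `c₂ = a₀ (2 + d₀/a₀)`,
this gives `a₃ / a₀ = 1 + k (2 + d₀/a₀)`, a real number exceeding `1` because `d₀/a₀ > -2`. -/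

open Complex

lemma Complex.eq_ofReal_mul_of_div_norm_eq {z w : ℂ} (h : z / ‖z‖ = w / ‖w‖) :
    w = ((‖w‖ / ‖z‖ : ℝ) : ℂ) * z := by
  calc w = ‖w‖ * (w / ‖w‖) := by
        rcases eq_or_ne w 0 with rfl | hw
        · simp
        · rw [mul_div_cancel₀]; exact_mod_cast norm_ne_zero_iff.mpr hw
    _ = ((‖w‖ / ‖z‖ : ℝ) : ℂ) * z := by rw [← h]; push_cast; ring

theorem wboson_base_point_condition_general (a₀ d₀ a₃ : ℂ) (ha : a₀ ≠ 0)
    (h₃ : a₃ - a₀ ≠ 0)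
    (hreal : (d₀ / a₀).im = 0) (hgt : -2 < (d₀ / a₀).re)
    (hphase : (2 * a₀ + d₀) / (‖2 * a₀ + d₀‖ : ℂ)
      = (a₃ - a₀) / (‖a₃ - a₀‖ : ℂ)) :
    (a₃ / a₀).im = 0 ∧ 1 < (a₃ / a₀).re := by
  set r := (d₀ / a₀).re
  set k := ‖a₃ - a₀‖ / ‖2 * a₀ + d₀‖
  have hd : d₀ = r * a₀ := (div_eq_iff ha).mp (Complex.ext rfl hreal)
  have hscale : a₃ - a₀ = k * (2 * a₀ + d₀) := eq_ofReal_mul_of_div_norm_eq hphase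
  have hk : 0 < k := by
    refine lt_of_le_of_ne (by positivity) fun hk0 => h₃ ?_
    rw [hscale, ← hk0, ofReal_zero, zero_mul]
  have hratio : a₃ / a₀ = ((1 + k * (2 + r) : ℝ) : ℂ) := by
    rw [div_eq_iff ha]; push_cast; linear_combination hscale + k * hd
  rw [hratio, ofReal_im, ofReal_re]
  exact ⟨rfl, lt_add_of_pos_right 1 (mul_pos hk (by linarith))⟩

theorem wboson_base_point_condition (a₀ d₀ a₃ : ℂ) (ha : a₀ ≠ 0)
    (h₂ : 2 * a₀ + d₀ ≠ 0) (h₃ : a₃ - a₀ ≠ 0)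
    (hreal : (d₀ / a₀).im = 0) (hgt : -2 < (d₀ / a₀).re)
    (hphase : (2 * a₀ + d₀) / (‖2 * a₀ + d₀‖ : ℂ)
      = (a₃ - a₀) / (‖a₃ - a₀‖ : ℂ)) :
    (a₃ / a₀).im = 0 ∧ 1 < (a₃ / a₀).re :=
  wboson_base_point_condition_general a₀ d₀ a₃ ha h₃ hreal hgt hphase
end

section
/- Let n ∈ ℤ with n ≥ 2, let a₀, d₀ ∈ ℂ with a₀ ≠ 0, and define c₁ = (1−n)·d₀ and c₂ = n·(2a₀ + d₀), both nonzero. If c₁/|c₁| = c₂/|c₂|, then d₀/a₀ is real and −2 < d₀/a₀ < 0. -/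
open Complex

/-!
Equal phases make `c₁ = (1 - n) d₀` a positive multiple of `c₂ = n (2 a₀ + d₀)`, so `-d₀` is a
positive multiple `s (2 a₀ + d₀)` of `2 a₀ + d₀`. Solving, `d₀ = -2 s / (1 + s) · a₀`, and
`-2 s / (1 + s)` lies strictly between `-2` and `0` for `s > 0`.
-/

theorem Complex.exists_pos_mul_eq_of_div_norm_eq {x y : ℂ} (hx : x ≠ 0) (hy : y ≠ 0)
    (h : x / ‖x‖ = y / ‖y‖) : ∃ t : ℝ, 0 < t ∧ x = t * y := by
  have hx' : (‖x‖ : ℂ) ≠ 0 := by exact_mod_cast norm_ne_zero_iff.mpr hx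
  have hy' : (‖y‖ : ℂ) ≠ 0 := by exact_mod_cast norm_ne_zero_iff.mpr hy
  refine ⟨‖x‖ / ‖y‖, div_pos (norm_pos_iff.mpr hx) (norm_pos_iff.mpr hy), ?_⟩
  rw [div_eq_div_iff hx' hy'] at h
  push_cast
  field_simp
  linear_combination h

theorem Complex.div_eq_ofReal_of_neg_eq_mul {a d : ℂ} {s : ℝ} (ha : a ≠ 0) (hs : 1 + s ≠ 0)
    (h : -d = s * (2 * a + d)) : d / a = ((-2 * s / (1 + s) : ℝ) : ℂ) := by
  have hs' : (1 + s : ℂ) ≠ 0 := by exact_mod_cast hs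
  push_cast
  rw [div_eq_div_iff ha hs']
  linear_combination -h

theorem neg_two_lt_neg_two_mul_div_one_add {s : ℝ} (hs : 0 < s) :
    -2 < -2 * s / (1 + s) ∧ -2 * s / (1 + s) < 0 := by
  have h1s : 0 < 1 + s := by positivity
  constructor
  · rw [lt_div_iff₀ h1s]
    linarith
  · exact div_neg_of_neg_of_pos (by linarith) h1s

theorem hypermultiplet_junction_on_curve (n : ℤ) (hn : 2 ≤ n)
    (a₀ d₀ : ℂ) (ha : a₀ ≠ 0)
    (h₁ : ((1 - n : ℤ) : ℂ) * d₀ ≠ 0)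
    (h₂ : (n : ℂ) * (2 * a₀ + d₀) ≠ 0)
    (hphase : ((1 - n : ℤ) : ℂ) * d₀ / (‖((1 - n : ℤ) : ℂ) * d₀‖ : ℂ)
      = (n : ℂ) * (2 * a₀ + d₀) / (‖(n : ℂ) * (2 * a₀ + d₀)‖ : ℂ)) :
    (d₀ / a₀).im = 0 ∧ -2 < (d₀ / a₀).re ∧ (d₀ / a₀).re < 0 := by
  obtain ⟨t, ht, hc⟩ := Complex.exists_pos_mul_eq_of_div_norm_eq h₁ h₂ hphase
  have hn1 : (0 : ℝ) < n - 1 := by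
    have : (2 : ℝ) ≤ n := by exact_mod_cast hn
    linarith
  have hs : 0 < t * n / (n - 1) := by positivity
  have hray : -d₀ = ((t * n / (n - 1) : ℝ) : ℂ) * (2 * a₀ + d₀) := by
    have hn1' : ((n : ℂ) - 1) ≠ 0 := by exact_mod_cast hn1.ne'
    push_cast at hc ⊢
    rw [div_mul_eq_mul_div, eq_div_iff hn1']
    linear_combination hc
  rw [Complex.div_eq_ofReal_of_neg_eq_mul ha (by positivity) hray, ofReal_re, ofReal_im]
  exact ⟨rfl, neg_two_lt_neg_two_mul_div_one_add hs⟩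
end
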